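/- Assume ξ and η are mutually singular. Let s ∈ ℝ satisfy ξ{s} > 0 and let u ∈ [0,1). Then τ*(ζ(s) + u·ξ{s}) < ∞ if and only if τ^{1−u}(s) < ∞, and in that case ζ⁻¹(τ*(ζ(s) + u·ξ{s})) = τ^{1−u}(s). -/

import Mathlib

/-!
`ζ` is strictly increasing, left-continuous, and jumps by `ξ{x} + η{x}` at every `x`; hence `ζ⁻¹`
sends the whole jump interval `[ζ x, ζ x + ξ{x} + η{x}]` to `x`, and it is monotone and
1-Lipschitz. On the jump interval of an atom `x`, `ξ*` and `η*` are Lebesgue measure on its first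
`ξ{x}`, resp. `η{x}`, units; as `ξ ⟂ η`, at most one of them charges it, and `η{s} = 0`. So for
`r = ζ(s) + u ξ{s}` and `t` in the jump interval of some `w > s`,
  `ξ*[r,t] = (1-u) ξ{s} + ξ(s,w) + (part of ξ{w})`,  `η*[r,t] = η(s,w) + (part of η{w})`,
while no `t` in the jump interval of `s` itself has `ξ*[r,t] ≤ η*[r,t]`. Therefore `ζ⁻¹` maps
`{t > r : ξ*[r,t] ≤ η*[r,t]}` onto `{w > s : (1-u) ξ{s} + ξ(s,w) ≤ η[s,w]}` (with `t = ζ w + η{w}`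
as a preimage of `w`), and a continuous monotone map commutes with infima.
-/

open MeasureTheory

/-- The purely atomic part `μ^d` of a measure on `ℝ`. -/
noncomputable def atomicPart (μ : Measure ℝ) : Measure ℝ :=
  μ.restrict {t : ℝ | μ {t} ≠ 0}

/-- The diffuse part `μ^c` of a measure on `ℝ`. -/
noncomputable def diffusePart (μ : Measure ℝ) : Measure ℝ :=
  μ.restrict {t : ℝ | μ {t} = 0}

/-- The time change `ζ`. -/
noncomputable def zeta (ξ η : Measure ℝ) (s : ℝ) : ℝ :=
  if 0 ≤ s then
    s + (atomicPart ξ (Set.Ico 0 s)).toReal + (atomicPart η (Set.Ico 0 s)).toReal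
  else
    s - (atomicPart ξ (Set.Ico s 0)).toReal - (atomicPart η (Set.Ico s 0)).toReal

/-- The generalized inverse `ζ⁻¹` of the time change `ζ`. -/
noncomputable def zetaInv (ξ η : Measure ℝ) (t : ℝ) : ℝ :=
  sInf {s : ℝ | t ≤ zeta ξ η s}

/-- The stretched measure `μ*` built from `μ` using the time change `ζ` of `(ξ, η)`. -/
noncomputable def starM (ξ η μ : Measure ℝ) : Measure ℝ :=
  (diffusePart μ).map (zeta ξ η) +
    (atomicPart μ).bind fun t =>
      (μ {t})⁻¹ • volume.restrict (Set.Icc (zeta ξ η t) (zeta ξ η t + (μ {t}).toReal))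

/-- `τ^u(s) := inf{t > s : u ξ{s} + ξ((s,t)) ≤ η[s,t]}`, with `inf ∅ = ∞`. -/
noncomputable def tauU (ξ η : Measure ℝ) (u s : ℝ) : EReal :=
  sInf (Real.toEReal ''
    {t : ℝ | s < t ∧ ENNReal.ofReal u * ξ {s} + ξ (Set.Ioo s t) ≤ η (Set.Icc s t)})

/-- `τ*(r) := inf{t > r : ξ*[r,t] ≤ η*[r,t]}`, with `inf ∅ = ∞`. -/
noncomputable def tauStar (ξ η : Measure ℝ) (r : ℝ) : EReal :=
  sInf (Real.toEReal ''
    {t : ℝ | r < t ∧ starM ξ η ξ (Set.Icc r t) ≤ starM ξ η η (Set.Icc r t)})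

open Set Filter Topology

section MeasureIco

variable (ρ : Measure ℝ) [IsLocallyFiniteMeasure ρ]

theorem measure_Ico_toReal_add {a b c : ℝ} (hab : a ≤ b) (hbc : b ≤ c) :
    (ρ (Ico a c)).toReal = (ρ (Ico a b)).toReal + (ρ (Ico b c)).toReal := by
  rw [← Ico_union_Ico_eq_Ico hab hbc, measure_union Ico_disjoint_Ico_same measurableSet_Ico,
    ENNReal.toReal_add measure_Ico_lt_top.ne measure_Ico_lt_top.ne]

variable (w : ℝ)

theorem tendsto_measure_Ico_sub_nhdsGT :
    Tendsto (fun δ => ρ (Ico (w - δ) w)) (𝓝[>] 0) (𝓝 0) := by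
  have hempty : ⋂ δ > (0 : ℝ), Ico (w - δ) w = ∅ := by
    refine eq_empty_of_forall_notMem fun x hx => ?_
    simp only [mem_iInter, mem_Ico] at hx
    have hxw := (hx 1 one_pos).2
    linarith [(hx ((w - x) / 2) (by linarith)).1]
  have h := tendsto_measure_biInter_gt (μ := ρ) (a := (0 : ℝ)) (s := fun δ => Ico (w - δ) w)
    (fun _ _ => measurableSet_Ico.nullMeasurableSet)
    (fun i j _ hij => Ico_subset_Ico_left (by linarith)) ⟨1, one_pos, measure_Ico_lt_top.ne⟩
  rwa [hempty, measure_empty] at h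

theorem tendsto_measure_Ico_add_nhdsGT :
    Tendsto (fun δ => ρ (Ico w (w + δ))) (𝓝[>] 0) (𝓝 (ρ {w})) := by
  have hsingleton : ⋂ δ > (0 : ℝ), Ico w (w + δ) = {w} := by
    refine Subset.antisymm (fun x hx => ?_) ?_
    · simp only [mem_iInter, mem_Ico] at hx
      by_contra hxw
      have hwx : w < x := lt_of_le_of_ne (hx 1 one_pos).1 (Ne.symm hxw)
      linarith [(hx ((x - w) / 2) (by linarith)).2]
    · simp only [subset_iInter_iff, singleton_subset_iff, mem_Ico]
      exact fun δ hδ => ⟨le_rfl, by linarith⟩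
  have h := tendsto_measure_biInter_gt (μ := ρ) (a := (0 : ℝ)) (s := fun δ => Ico w (w + δ))
    (fun _ _ => measurableSet_Ico.nullMeasurableSet)
    (fun i j _ hij => Ico_subset_Ico_right (by linarith)) ⟨1, one_pos, measure_Ico_lt_top.ne⟩
  rwa [hsingleton] at h

end MeasureIco

theorem MeasureTheory.Measure.MutuallySingular.measure_singleton_eq_zero_or {α : Type*}
    [MeasurableSpace α] {μ ν : Measure α} (h : μ ⟂ₘ ν) (x : α) : μ {x} = 0 ∨ ν {x} = 0 := by
  obtain ⟨E, -, hμE, hνE⟩ := h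
  by_cases hx : x ∈ E
  · exact .inl (measure_mono_null (singleton_subset_iff.2 hx) hμE)
  · exact .inr (measure_mono_null (singleton_subset_iff.2 hx) hνE)

theorem measure_Icc_eq_measure_Ioo_add {ρ : Measure ℝ} {s w : ℝ} (hs : ρ {s} = 0) (hsw : s < w) :
    ρ (Icc s w) = ρ (Ioo s w) + ρ {w} := by
  rw [← measure_congr (Ioc_ae_eq_Icc' hs), ← Ioo_union_right hsw,
    measure_union (disjoint_singleton_right.2 (lt_irrefl w ·.2)) (measurableSet_singleton w)]

theorem Real.volume_Icc_inter_Icc (a b c d : ℝ) :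
    volume (Icc a b ∩ Icc c d) = ENNReal.ofReal (min b d - max a c) := by
  rw [Icc_inter_Icc, Real.volume_Icc]

theorem sInf_toEReal_image_ne_top_iff (T : Set ℝ) :
    sInf (Real.toEReal '' T) ≠ ⊤ ↔ T.Nonempty := by
  refine ⟨fun h => nonempty_iff_ne_empty.2 fun hT => h (by rw [hT, image_empty, sInf_empty]),
    fun ⟨x, hx⟩ => ne_top_of_le_ne_top (EReal.coe_ne_top x) (sInf_le (mem_image_of_mem _ hx))⟩

theorem sInf_toEReal_image {T : Set ℝ} (hT : T.Nonempty) (hb : BddBelow T) :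
    sInf (Real.toEReal '' T) = (sInf T : ℝ) :=
  (Monotone.map_csInf_of_continuousAt continuous_coe_real_ereal.continuousAt
    (fun _ _ => EReal.coe_le_coe) hT hb).symm

theorem volume_inter_Icc_add_toReal_eq_zero {m : ENNReal} (hm : m = 0) (S : Set ℝ) (a : ℝ) :
    volume (S ∩ Icc a (a + m.toReal)) = 0 := by
  rw [hm, ENNReal.toReal_zero, add_zero, Icc_self]
  exact measure_mono_null inter_subset_right (measure_singleton a)

section Atoms

variable (μ : Measure ℝ)

theorem countable_setOf_measure_singleton_ne_zero [SFinite μ] :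
    {x : ℝ | μ {x} ≠ 0}.Countable := by
  simpa only [pos_iff_ne_zero] using Measure.countable_meas_pos_of_disjoint_iUnion₀ (μ := μ)
    (fun x => (measurableSet_singleton x).nullMeasurableSet)
    (fun x y hxy => (disjoint_singleton.2 hxy).aedisjoint)

theorem atomicPart_singleton (x : ℝ) : atomicPart μ {x} = μ {x} := by
  rw [atomicPart, Measure.restrict_apply (measurableSet_singleton x)]
  by_cases hx : μ {x} = 0
  · rw [hx, (singleton_inter_eq_empty (s := {t : ℝ | μ {t} ≠ 0})).2 (not_not.2 hx),
      measure_empty]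
  · rw [inter_eq_left.2 (singleton_subset_iff.2 hx)]

theorem diffusePart_singleton (x : ℝ) : diffusePart μ {x} = 0 := by
  rw [diffusePart, Measure.restrict_apply (measurableSet_singleton x)]
  by_cases hx : μ {x} = 0
  · exact measure_mono_null inter_subset_left hx
  · rw [(singleton_inter_eq_empty (s := {t : ℝ | μ {t} = 0})).2 hx, measure_empty]

theorem diffusePart_add_atomicPart [SFinite μ] : diffusePart μ + atomicPart μ = μ := by
  have hcompl : {t : ℝ | μ {t} = 0} = {t : ℝ | μ {t} ≠ 0}ᶜ := by ext; simp
  rw [diffusePart, atomicPart, hcompl, add_comm,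
    Measure.restrict_add_restrict_compl (countable_setOf_measure_singleton_ne_zero μ).measurableSet]

instance [IsLocallyFiniteMeasure μ] : IsLocallyFiniteMeasure (atomicPart μ) :=
  inferInstanceAs (IsLocallyFiniteMeasure (μ.restrict _))

theorem aemeasurable_atomicPart [SFinite μ] {β : Type*} [MeasurableSpace β] (f : ℝ → β) :
    AEMeasurable f (atomicPart μ) := by
  have := (countable_setOf_measure_singleton_ne_zero μ).to_subtype
  rw [atomicPart, ← biUnion_of_singleton {x : ℝ | μ {x} ≠ 0}, biUnion_eq_iUnion,
    aemeasurable_iUnion_iff]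
  exact fun x => aemeasurable_const.congr <|
    (ae_restrict_mem (measurableSet_singleton _)).mono fun y hy => by rw [mem_singleton_iff.1 hy]

theorem ae_atomicPart_measure_singleton_ne_zero [SFinite μ] :
    ∀ᵐ x ∂(atomicPart μ), μ {x} ≠ 0 :=
  ae_restrict_mem (countable_setOf_measure_singleton_ne_zero μ).measurableSet

end Atoms

section Stretch

variable (μ : Measure ℝ) [IsLocallyFiniteMeasure μ] (c : ℝ → ℝ) (S : Set ℝ)

theorem setLIntegral_singleton_atomicPart_inv_mul_volume (x : ℝ) :
    ∫⁻ y in {x}, (μ {y})⁻¹ * volume (S ∩ Icc (c y) (c y + (μ {y}).toReal)) ∂atomicPart μ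
      = volume (S ∩ Icc (c x) (c x + (μ {x}).toReal)) := by
  rw [lintegral_singleton, atomicPart_singleton]
  by_cases hx : μ {x} = 0
  · rw [hx, mul_zero, volume_inter_Icc_add_toReal_eq_zero rfl]
  · rw [mul_comm, ← mul_assoc, ENNReal.mul_inv_cancel hx measure_singleton_lt_top.ne, one_mul]

theorem setLIntegral_atomicPart_inv_mul_volume_of_subset {B : Set ℝ} (hB : MeasurableSet B)
    (hBS : ∀ x ∈ B, Icc (c x) (c x + (μ {x}).toReal) ⊆ S) :
    ∫⁻ y in B, (μ {y})⁻¹ * volume (S ∩ Icc (c y) (c y + (μ {y}).toReal)) ∂atomicPart μ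
      = atomicPart μ B := by
  rw [← setLIntegral_one]
  refine setLIntegral_congr_fun_ae hB ?_
  filter_upwards [ae_atomicPart_measure_singleton_ne_zero μ] with x hx hxB
  rw [inter_eq_right.2 (hBS x hxB), Real.volume_Icc, add_sub_cancel_left,
    ENNReal.ofReal_toReal measure_singleton_lt_top.ne, ENNReal.inv_mul_cancel hx
      measure_singleton_lt_top.ne]

end Stretch

section Zeta

variable (ξ η : Measure ℝ)

noncomputable def zetaJump (x : ℝ) : ℝ := (ξ {x}).toReal + (η {x}).toReal

theorem zetaJump_nonneg (x : ℝ) : 0 ≤ zetaJump ξ η x := by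
  unfold zetaJump; positivity

theorem toReal_measure_singleton_le_zetaJump_left (x : ℝ) :
    (ξ {x}).toReal ≤ zetaJump ξ η x :=
  le_add_of_nonneg_right ENNReal.toReal_nonneg

theorem toReal_measure_singleton_le_zetaJump_right (x : ℝ) :
    (η {x}).toReal ≤ zetaJump ξ η x :=
  le_add_of_nonneg_left ENNReal.toReal_nonneg

theorem zeta_add_mem_Icc_zeta_add_zetaJump (w : ℝ) :
    zeta ξ η w + (η {w}).toReal ∈ Icc (zeta ξ η w) (zeta ξ η w + zetaJump ξ η w) :=
  ⟨le_add_of_nonneg_right ENNReal.toReal_nonneg,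
    (add_le_add_iff_left _).2 (toReal_measure_singleton_le_zetaJump_right ξ η w)⟩

variable [IsLocallyFiniteMeasure ξ] [IsLocallyFiniteMeasure η]

theorem zeta_eq_add {a b : ℝ} (hab : a ≤ b) :
    zeta ξ η b = zeta ξ η a + (b - a)
      + (atomicPart ξ (Ico a b)).toReal + (atomicPart η (Ico a b)).toReal := by
  rcases le_or_gt 0 a with h0a | h0a
  · rw [zeta, zeta, if_pos h0a, if_pos (h0a.trans hab), measure_Ico_toReal_add _ h0a hab,
      measure_Ico_toReal_add (atomicPart η) h0a hab]
    ring
  rcases le_or_gt 0 b with h0b | h0b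
  · rw [zeta, zeta, if_pos h0b, if_neg h0a.not_ge, measure_Ico_toReal_add _ h0a.le h0b,
      measure_Ico_toReal_add (atomicPart η) h0a.le h0b]
    ring
  · rw [zeta, zeta, if_neg h0a.not_ge, if_neg h0b.not_ge, measure_Ico_toReal_add _ hab h0b.le,
      measure_Ico_toReal_add (atomicPart η) hab h0b.le]
    ring

theorem sub_le_zeta_sub {a b : ℝ} (hab : a ≤ b) : b - a ≤ zeta ξ η b - zeta ξ η a := by
  rw [zeta_eq_add ξ η hab]
  have : 0 ≤ (atomicPart ξ (Ico a b)).toReal + (atomicPart η (Ico a b)).toReal := by positivity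
  linarith

theorem zeta_add_zetaJump_add_le {a b : ℝ} (hab : a < b) :
    zeta ξ η a + zetaJump ξ η a + (b - a) ≤ zeta ξ η b := by
  have hatom (μ : Measure ℝ) [IsLocallyFiniteMeasure μ] :
      (μ {a}).toReal ≤ (atomicPart μ (Ico a b)).toReal := by
    rw [← atomicPart_singleton μ a]
    exact ENNReal.toReal_mono measure_Ico_lt_top.ne
      (measure_mono (singleton_subset_iff.2 (left_mem_Ico.2 hab)))
  rw [zeta_eq_add ξ η hab.le, zetaJump]
  linarith [hatom ξ, hatom η]

theorem zeta_strictMono : StrictMono (zeta ξ η) := fun a b hab => by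
  linarith [zeta_add_zetaJump_add_le ξ η hab, zetaJump_nonneg ξ η a]

theorem tendsto_zeta_sub_nhdsGT (w : ℝ) :
    Tendsto (fun δ => zeta ξ η (w - δ)) (𝓝[>] 0) (𝓝 (zeta ξ η w)) := by
  have hatom (μ : Measure ℝ) [IsLocallyFiniteMeasure μ] :
      Tendsto (fun δ => (atomicPart μ (Ico (w - δ) w)).toReal) (𝓝[>] 0) (𝓝 0) :=
    (ENNReal.tendsto_toReal ENNReal.zero_ne_top).comp
      (tendsto_measure_Ico_sub_nhdsGT (atomicPart μ) w)
  have h := (tendsto_const_nhds (x := zeta ξ η w)).sub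
    ((tendsto_nhdsWithin_of_tendsto_nhds tendsto_id).add (hatom ξ) |>.add (hatom η))
  simp only [add_zero, sub_zero] at h
  refine h.congr' (eventually_nhdsWithin_of_forall fun δ (hδ : 0 < δ) => ?_)
  dsimp only [id]
  rw [zeta_eq_add ξ η (by linarith : w - δ ≤ w)]
  ring

theorem tendsto_zeta_add_nhdsGT (w : ℝ) :
    Tendsto (fun δ => zeta ξ η (w + δ)) (𝓝[>] 0) (𝓝 (zeta ξ η w + zetaJump ξ η w)) := by
  have hatom (μ : Measure ℝ) [IsLocallyFiniteMeasure μ] :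
      Tendsto (fun δ => (atomicPart μ (Ico w (w + δ))).toReal) (𝓝[>] 0) (𝓝 (μ {w}).toReal) := by
    rw [← atomicPart_singleton μ w]
    exact (ENNReal.tendsto_toReal (measure_singleton_lt_top (μ := atomicPart μ)).ne).comp
      (tendsto_measure_Ico_add_nhdsGT (atomicPart μ) w)
  have h := (tendsto_const_nhds (x := zeta ξ η w)).add
    (tendsto_nhdsWithin_of_tendsto_nhds tendsto_id) |>.add (hatom ξ) |>.add (hatom η)
  rw [add_zero, add_assoc] at h
  refine h.congr' (eventually_nhdsWithin_of_forall fun δ (hδ : 0 < δ) => ?_)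
  dsimp only [id]
  rw [zeta_eq_add ξ η (by linarith : w ≤ w + δ)]
  ring

theorem bddBelow_setOf_le_zeta (t : ℝ) : BddBelow {v | t ≤ zeta ξ η v} := by
  refine ⟨min 0 (t - zeta ξ η 0), fun v (hv : t ≤ zeta ξ η v) => ?_⟩
  by_contra! hlt
  have hv0 : v ≤ 0 := (hlt.trans_le (min_le_left _ _)).le
  linarith [sub_le_zeta_sub ξ η hv0, hlt.trans_le (min_le_right _ _)]

theorem nonempty_setOf_le_zeta (t : ℝ) : {v | t ≤ zeta ξ η v}.Nonempty := by
  refine ⟨max 0 (t - zeta ξ η 0), show t ≤ zeta ξ η _ from ?_⟩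
  linarith [sub_le_zeta_sub ξ η (le_max_left 0 (t - zeta ξ η 0)), le_max_right 0 (t - zeta ξ η 0)]

theorem zeta_zetaInv_le (t : ℝ) : zeta ξ η (zetaInv ξ η t) ≤ t := by
  refine le_of_tendsto (tendsto_zeta_sub_nhdsGT ξ η _)
    (eventually_nhdsWithin_of_forall fun δ (hδ : 0 < δ) => ?_)
  by_contra! h
  have := csInf_le (bddBelow_setOf_le_zeta ξ η t) h.le
  rw [← zetaInv] at this
  linarith

theorem le_zeta_zetaInv_add_zetaJump (t : ℝ) :
    t ≤ zeta ξ η (zetaInv ξ η t) + zetaJump ξ η (zetaInv ξ η t) := by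
  refine ge_of_tendsto (tendsto_zeta_add_nhdsGT ξ η _)
    (eventually_nhdsWithin_of_forall fun δ (hδ : 0 < δ) => ?_)
  obtain ⟨v, hv, hvlt⟩ := exists_lt_of_csInf_lt (nonempty_setOf_le_zeta ξ η t)
    (lt_add_of_pos_right (zetaInv ξ η t) hδ)
  exact hv.trans ((zeta_strictMono ξ η).monotone hvlt.le)

theorem zetaInv_eq_of_mem_Icc {t w : ℝ} (ht : t ∈ Icc (zeta ξ η w) (zeta ξ η w + zetaJump ξ η w)) :
    zetaInv ξ η t = w := by
  have h₁ := zeta_zetaInv_le ξ η t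
  have h₂ := le_zeta_zetaInv_add_zetaJump ξ η t
  rcases lt_trichotomy (zetaInv ξ η t) w with hlt | heq | hgt
  · linarith [zeta_add_zetaJump_add_le ξ η hlt, ht.1]
  · exact heq
  · linarith [zeta_add_zetaJump_add_le ξ η hgt, ht.2]

theorem monotone_zetaInv : Monotone (zetaInv ξ η) := fun _ t₂ ht =>
  csInf_le_csInf (bddBelow_setOf_le_zeta ξ η _) (nonempty_setOf_le_zeta ξ η t₂)
    fun _ hv => ht.trans hv

theorem lipschitzWith_one_zetaInv : LipschitzWith 1 (zetaInv ξ η) := by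
  refine LipschitzWith.of_le_add fun t₁ t₂ => ?_
  by_contra! h
  have hw : zetaInv ξ η t₂ < zetaInv ξ η t₁ := by linarith [dist_nonneg (x := t₁) (y := t₂)]
  linarith [zeta_add_zetaJump_add_le ξ η hw, zeta_zetaInv_le ξ η t₁,
    le_zeta_zetaInv_add_zetaJump ξ η t₂, Real.dist_eq t₁ t₂ ▸ le_abs_self (t₁ - t₂)]

end Zeta

section StarMeasure

variable {ξ η μ : Measure ℝ} [IsLocallyFiniteMeasure ξ] [IsLocallyFiniteMeasure η]

theorem Icc_inter_Icc_zeta_eq_empty (hμ : ∀ x, (μ {x}).toReal ≤ zetaJump ξ η x)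
    {r t s w x : ℝ} (hr : zeta ξ η s ≤ r) (ht : t ≤ zeta ξ η w + zetaJump ξ η w)
    (hx : x ∉ Icc s w) :
    Icc r t ∩ Icc (zeta ξ η x) (zeta ξ η x + (μ {x}).toReal) = ∅ := by
  rw [Icc_inter_Icc, Icc_eq_empty_iff, not_le]
  rcases not_and_or.1 hx with hxs | hwx
  · have := zeta_add_zetaJump_add_le ξ η (not_le.1 hxs)
    exact (min_le_right _ _).trans_lt (lt_max_of_lt_left (by linarith [hμ x]))
  · have := zeta_add_zetaJump_add_le ξ η (not_le.1 hwx)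
    exact (min_le_left _ _).trans_lt (lt_max_of_lt_right (by linarith [zetaJump_nonneg ξ η w]))

theorem zeta_preimage_Icc_subset (hμ : ∀ x, (μ {x}).toReal ≤ zetaJump ξ η x)
    {r t s w : ℝ} (hr : zeta ξ η s ≤ r) (ht : t ≤ zeta ξ η w + zetaJump ξ η w) :
    zeta ξ η ⁻¹' Icc r t ⊆ Icc s w := fun x hx => by
  by_contra hxsw
  have hζx : zeta ξ η x ∈ Icc (zeta ξ η x) (zeta ξ η x + (μ {x}).toReal) :=
    left_mem_Icc.2 (le_add_of_nonneg_right ENNReal.toReal_nonneg)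
  exact (Icc_inter_Icc_zeta_eq_empty hμ hr ht hxsw).subset ⟨hx, hζx⟩

theorem lintegral_atomicPart_eq_setLIntegral_Icc (hμ : ∀ x, (μ {x}).toReal ≤ zetaJump ξ η x)
    {r t s w : ℝ} (hr : zeta ξ η s ≤ r) (ht : t ≤ zeta ξ η w + zetaJump ξ η w) :
    ∫⁻ x, (μ {x})⁻¹ * volume (Icc r t ∩ Icc (zeta ξ η x) (zeta ξ η x + (μ {x}).toReal))
        ∂atomicPart μ
      = ∫⁻ x in Icc s w,
          (μ {x})⁻¹ * volume (Icc r t ∩ Icc (zeta ξ η x) (zeta ξ η x + (μ {x}).toReal))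
          ∂atomicPart μ := by
  refine (setLIntegral_eq_of_support_subset fun x hx => ?_).symm
  by_contra hxsw
  exact hx (by simp only [Icc_inter_Icc_zeta_eq_empty hμ hr ht hxsw, measure_empty, mul_zero])

variable [IsLocallyFiniteMeasure μ]

theorem starM_apply {S : Set ℝ} (hS : MeasurableSet S) :
    starM ξ η μ S = diffusePart μ (zeta ξ η ⁻¹' S)
      + ∫⁻ x, (μ {x})⁻¹ * volume (S ∩ Icc (zeta ξ η x) (zeta ξ η x + (μ {x}).toReal))
          ∂atomicPart μ := by
  rw [starM, Measure.add_apply, Measure.map_apply (zeta_strictMono ξ η).monotone.measurable hS,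
    Measure.bind_apply hS (aemeasurable_atomicPart μ _)]
  simp only [Measure.smul_apply, Measure.restrict_apply hS, smul_eq_mul]

theorem starM_Icc_eq_volume_inter (hμ : ∀ x, (μ {x}).toReal ≤ zetaJump ξ η x)
    {r t s : ℝ} (hr : zeta ξ η s ≤ r) (ht : t ≤ zeta ξ η s + zetaJump ξ η s) :
    starM ξ η μ (Icc r t)
      = volume (Icc r t ∩ Icc (zeta ξ η s) (zeta ξ η s + (μ {s}).toReal)) := by
  have hdiffuse : diffusePart μ (zeta ξ η ⁻¹' Icc r t) = 0 :=
    measure_mono_null ((zeta_preimage_Icc_subset hμ hr ht).trans (Icc_self s).subset)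
      (diffusePart_singleton μ s)
  rw [starM_apply measurableSet_Icc, hdiffuse, zero_add,
    lintegral_atomicPart_eq_setLIntegral_Icc hμ hr ht, Icc_self,
    setLIntegral_singleton_atomicPart_inv_mul_volume]

theorem starM_Icc_eq_add_measure_Ioo_add (hμ : ∀ x, (μ {x}).toReal ≤ zetaJump ξ η x)
    {r t s w : ℝ} (hsw : s < w) (hr : r ∈ Icc (zeta ξ η s) (zeta ξ η s + zetaJump ξ η s))
    (ht : t ∈ Icc (zeta ξ η w) (zeta ξ η w + zetaJump ξ η w)) :
    starM ξ η μ (Icc r t)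
      = volume (Icc r t ∩ Icc (zeta ξ η s) (zeta ξ η s + (μ {s}).toReal)) + μ (Ioo s w)
        + volume (Icc r t ∩ Icc (zeta ξ η w) (zeta ξ η w + (μ {w}).toReal)) := by
  have hIoo : ∀ x ∈ Ioo s w, Icc (zeta ξ η x) (zeta ξ η x + (μ {x}).toReal) ⊆ Icc r t :=
    fun x hx => Icc_subset_Icc
      (by linarith [zeta_add_zetaJump_add_le ξ η hx.1, hr.2, hx.1])
      (by linarith [zeta_add_zetaJump_add_le ξ η hx.2, ht.1, hμ x, hx.2])
  have hdiffuse : diffusePart μ (zeta ξ η ⁻¹' Icc r t) = diffusePart μ (Ioo s w) := by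
    refine le_antisymm ?_ (measure_mono fun x hx => hIoo x hx (left_mem_Icc.2
      (le_add_of_nonneg_right ENNReal.toReal_nonneg)))
    calc diffusePart μ (zeta ξ η ⁻¹' Icc r t) ≤ diffusePart μ (Icc s w) :=
          measure_mono (zeta_preimage_Icc_subset hμ hr.1 ht.2)
      _ = diffusePart μ (Ioo s w) :=
          measure_congr (Ioo_ae_eq_Icc' (diffusePart_singleton μ s)
            (diffusePart_singleton μ w)).symm
  have hsplit : Icc s w = {s} ∪ (Ioo s w ∪ {w}) := by
    rw [Ioo_union_right hsw, ← insert_eq, Ioc_insert_left hsw.le]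
  have hμIoo : μ (Ioo s w) = diffusePart μ (Ioo s w) + atomicPart μ (Ioo s w) := by
    rw [← Measure.add_apply, diffusePart_add_atomicPart]
  rw [starM_apply measurableSet_Icc, hdiffuse,
    lintegral_atomicPart_eq_setLIntegral_Icc hμ hr.1 ht.2, hsplit,
    lintegral_union (measurableSet_Ioo.union (measurableSet_singleton w))
      (disjoint_singleton_left.2 (by simp [hsw.ne])),
    lintegral_union (measurableSet_singleton w) (disjoint_singleton_right.2 (·.2.ne rfl)),
    setLIntegral_singleton_atomicPart_inv_mul_volume,
    setLIntegral_singleton_atomicPart_inv_mul_volume,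
    setLIntegral_atomicPart_inv_mul_volume_of_subset μ _ _ measurableSet_Ioo hIoo, hμIoo]
  ring

end StarMeasure

def tauStarSet (ξ η : Measure ℝ) (r : ℝ) : Set ℝ :=
  {t : ℝ | r < t ∧ starM ξ η ξ (Icc r t) ≤ starM ξ η η (Icc r t)}

def tauUSet (ξ η : Measure ℝ) (u s : ℝ) : Set ℝ :=
  {t : ℝ | s < t ∧ ENNReal.ofReal u * ξ {s} + ξ (Ioo s t) ≤ η (Icc s t)}

theorem tauStar_eq_sInf (ξ η : Measure ℝ) (r : ℝ) :
    tauStar ξ η r = sInf (Real.toEReal '' tauStarSet ξ η r) := rfl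

theorem tauU_eq_sInf (ξ η : Measure ℝ) (u s : ℝ) :
    tauU ξ η u s = sInf (Real.toEReal '' tauUSet ξ η u s) := rfl

section Atom

variable {ξ η : Measure ℝ} {s u : ℝ}

theorem zeta_add_mul_mem_Icc_zeta_add_zetaJump (hηs : η {s} = 0) (hu0 : 0 ≤ u) (hu1 : u ≤ 1) :
    zeta ξ η s + u * (ξ {s}).toReal ∈ Icc (zeta ξ η s) (zeta ξ η s + zetaJump ξ η s) := by
  have hξ : 0 ≤ (ξ {s}).toReal := ENNReal.toReal_nonneg
  rw [zetaJump, hηs, ENNReal.toReal_zero, add_zero]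
  exact ⟨by nlinarith, by nlinarith⟩

variable [IsLocallyFiniteMeasure ξ]

theorem volume_Icc_inter_Icc_zeta_atom (hu0 : 0 ≤ u) {t : ℝ}
    (ht : zeta ξ η s + (ξ {s}).toReal ≤ t) :
    volume (Icc (zeta ξ η s + u * (ξ {s}).toReal) t
        ∩ Icc (zeta ξ η s) (zeta ξ η s + (ξ {s}).toReal))
      = ENNReal.ofReal (1 - u) * ξ {s} := by
  have hξ : 0 ≤ (ξ {s}).toReal := ENNReal.toReal_nonneg
  rw [Real.volume_Icc_inter_Icc, min_eq_right ht, max_eq_left (by nlinarith),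
    ← ENNReal.ofReal_toReal (measure_singleton_lt_top (μ := ξ) (a := s)).ne,
    ← ENNReal.ofReal_mul' ENNReal.toReal_nonneg, ENNReal.toReal_ofReal hξ]
  ring_nf

variable [IsLocallyFiniteMeasure η]

theorem zeta_add_mem_tauStarSet (hsing : ξ ⟂ₘ η) (hξs : ξ {s} ≠ 0) (hu0 : 0 ≤ u) (hu1 : u ≤ 1)
    {w : ℝ} (hw : w ∈ tauUSet ξ η (1 - u) s) :
    zeta ξ η w + (η {w}).toReal ∈ tauStarSet ξ η (zeta ξ η s + u * (ξ {s}).toReal) := by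
  obtain ⟨hsw, hle⟩ := hw
  have hηs : η {s} = 0 := (hsing.measure_singleton_eq_zero_or s).resolve_left hξs
  have hr := zeta_add_mul_mem_Icc_zeta_add_zetaJump (ξ := ξ) hηs hu0 hu1
  have ht := zeta_add_mem_Icc_zeta_add_zetaJump ξ η w
  have hζsw := zeta_add_zetaJump_add_le ξ η hsw
  have hξw : volume (Icc (zeta ξ η s + u * (ξ {s}).toReal) (zeta ξ η w + (η {w}).toReal)
      ∩ Icc (zeta ξ η w) (zeta ξ η w + (ξ {w}).toReal)) = 0 := by
    rcases hsing.measure_singleton_eq_zero_or w with h | h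
    · exact volume_inter_Icc_add_toReal_eq_zero h _ _
    · rw [h, ENNReal.toReal_zero, add_zero]
      exact measure_mono_null (fun x hx => le_antisymm hx.1.2 hx.2.1) (measure_singleton _)
  have hηw : volume (Icc (zeta ξ η s + u * (ξ {s}).toReal) (zeta ξ η w + (η {w}).toReal)
      ∩ Icc (zeta ξ η w) (zeta ξ η w + (η {w}).toReal)) = η {w} := by
    rw [Real.volume_Icc_inter_Icc, min_self, max_eq_right (by linarith [hr.2]),
      add_sub_cancel_left, ENNReal.ofReal_toReal measure_singleton_lt_top.ne]
  refine ⟨by linarith [hr.2, ht.1], ?_⟩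
  rw [starM_Icc_eq_add_measure_Ioo_add (toReal_measure_singleton_le_zetaJump_left ξ η) hsw hr ht,
    starM_Icc_eq_add_measure_Ioo_add (toReal_measure_singleton_le_zetaJump_right ξ η) hsw hr ht,
    volume_Icc_inter_Icc_zeta_atom hu0
      (by linarith [ht.1, toReal_measure_singleton_le_zetaJump_left ξ η s]), hξw, hηw,
    volume_inter_Icc_add_toReal_eq_zero hηs, add_zero, zero_add,
    ← measure_Icc_eq_measure_Ioo_add hηs hsw]
  exact hle

theorem starM_Icc_lt_of_le_zeta_add (hηs : η {s} = 0) (hu0 : 0 ≤ u) {t : ℝ}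
    (hrt : zeta ξ η s + u * (ξ {s}).toReal < t) (hts : t ≤ zeta ξ η s + (ξ {s}).toReal) :
    starM ξ η η (Icc (zeta ξ η s + u * (ξ {s}).toReal) t)
      < starM ξ η ξ (Icc (zeta ξ η s + u * (ξ {s}).toReal) t) := by
  have hr : zeta ξ η s ≤ zeta ξ η s + u * (ξ {s}).toReal :=
    le_add_of_nonneg_right (mul_nonneg hu0 ENNReal.toReal_nonneg)
  have htJ : t ≤ zeta ξ η s + zetaJump ξ η s :=
    hts.trans ((add_le_add_iff_left _).2 (toReal_measure_singleton_le_zetaJump_left ξ η s))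
  rw [starM_Icc_eq_volume_inter (toReal_measure_singleton_le_zetaJump_left ξ η) hr htJ,
    starM_Icc_eq_volume_inter (toReal_measure_singleton_le_zetaJump_right ξ η) hr htJ,
    volume_inter_Icc_add_toReal_eq_zero hηs, Real.volume_Icc_inter_Icc, min_eq_left hts,
    max_eq_left hr, ENNReal.ofReal_pos]
  linarith

theorem zetaInv_mem_tauUSet (hηs : η {s} = 0) (hu0 : 0 ≤ u) (hu1 : u ≤ 1)
    {t : ℝ} (ht : t ∈ tauStarSet ξ η (zeta ξ η s + u * (ξ {s}).toReal)) :
    zetaInv ξ η t ∈ tauUSet ξ η (1 - u) s := by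
  obtain ⟨hrt, hle⟩ := ht
  have hr := zeta_add_mul_mem_Icc_zeta_add_zetaJump (ξ := ξ) hηs hu0 hu1
  have htw : t ∈ Icc (zeta ξ η (zetaInv ξ η t))
      (zeta ξ η (zetaInv ξ η t) + zetaJump ξ η (zetaInv ξ η t)) :=
    ⟨zeta_zetaInv_le ξ η t, le_zeta_zetaInv_add_zetaJump ξ η t⟩
  obtain ⟨w, hw⟩ : ∃ w, zetaInv ξ η t = w := ⟨_, rfl⟩
  rw [hw] at htw ⊢
  have hsw : s ≤ w := by
    by_contra! hws
    linarith [zeta_add_zetaJump_add_le ξ η hws, htw.2, hr.1]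
  rcases hsw.lt_or_eq with hsw | rfl
  · rw [starM_Icc_eq_add_measure_Ioo_add (toReal_measure_singleton_le_zetaJump_left ξ η) hsw hr htw,
      starM_Icc_eq_add_measure_Ioo_add (toReal_measure_singleton_le_zetaJump_right ξ η) hsw hr htw,
      volume_Icc_inter_Icc_zeta_atom hu0 (by linarith [zeta_add_zetaJump_add_le ξ η hsw, htw.1,
        toReal_measure_singleton_le_zetaJump_left ξ η s]),
      volume_inter_Icc_add_toReal_eq_zero hηs, zero_add] at hle
    refine ⟨hsw, le_trans le_self_add (hle.trans ?_)⟩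
    rw [measure_Icc_eq_measure_Ioo_add hηs hsw]
    refine add_le_add le_rfl ?_
    calc _ ≤ volume (Icc (zeta ξ η w) (zeta ξ η w + (η {w}).toReal)) :=
          measure_mono inter_subset_right
      _ = η {w} := by
        rw [Real.volume_Icc, add_sub_cancel_left, ENNReal.ofReal_toReal measure_singleton_lt_top.ne]
  · have hts : t ≤ zeta ξ η s + (ξ {s}).toReal := by
      simpa only [zetaJump, hηs, ENNReal.toReal_zero, add_zero] using htw.2
    exact absurd hle (starM_Icc_lt_of_le_zeta_add hηs hu0 hrt hts).not_ge

theorem zetaInv_image_tauStarSet (hsing : ξ ⟂ₘ η) (hξs : ξ {s} ≠ 0) (hu0 : 0 ≤ u) (hu1 : u ≤ 1) :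
    zetaInv ξ η '' tauStarSet ξ η (zeta ξ η s + u * (ξ {s}).toReal) = tauUSet ξ η (1 - u) s :=
  Subset.antisymm
    (image_subset_iff.2 fun _ ht => zetaInv_mem_tauUSet
      ((hsing.measure_singleton_eq_zero_or s).resolve_left hξs) hu0 hu1 ht)
    fun w hw => ⟨_, zeta_add_mem_tauStarSet hsing hξs hu0 hu1 hw,
      zetaInv_eq_of_mem_Icc ξ η (zeta_add_mem_Icc_zeta_add_zetaJump ξ η w)⟩

end Atom

/-- Lemma 3.5: if `ξ{s} > 0` and `u ∈ [0,1)`, then `τ*(ζ(s) + u ξ{s}) < ∞` iff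
`τ^{1-u}(s) < ∞`, and in that case `ζ⁻¹(τ*(ζ(s) + u ξ{s})) = τ^{1-u}(s)`. -/
theorem tauStar_zeta_of_atom (ξ η : Measure ℝ)
    [IsLocallyFiniteMeasure ξ] [IsLocallyFiniteMeasure η]
    (hsing : ξ ⟂ₘ η) (s : ℝ) (hξs : 0 < ξ {s}) (u : ℝ) (hu0 : 0 ≤ u) (hu1 : u < 1) :
    (tauStar ξ η (zeta ξ η s + u * (ξ {s}).toReal) ≠ ⊤ ↔ tauU ξ η (1 - u) s ≠ ⊤) ∧
      (∀ r : ℝ, tauStar ξ η (zeta ξ η s + u * (ξ {s}).toReal) = (r : EReal) →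
        ((zetaInv ξ η r : ℝ) : EReal) = tauU ξ η (1 - u) s) := by
  have himage := zetaInv_image_tauStarSet hsing hξs.ne' hu0 hu1.le
  have hbdd : BddBelow (tauStarSet ξ η (zeta ξ η s + u * (ξ {s}).toReal)) :=
    ⟨_, fun _ ht => ht.1.le⟩
  rw [tauStar_eq_sInf, tauU_eq_sInf, ← himage, sInf_toEReal_image_ne_top_iff,
    sInf_toEReal_image_ne_top_iff, image_nonempty]
  refine ⟨Iff.rfl, fun r hr => ?_⟩
  have hne := (sInf_toEReal_image_ne_top_iff _).1 (hr ▸ EReal.coe_ne_top r)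
  rw [sInf_toEReal_image hne hbdd, EReal.coe_eq_coe_iff] at hr
  rw [sInf_toEReal_image (hne.image _) ((monotone_zetaInv ξ η).map_bddBelow hbdd), ← hr,
    (monotone_zetaInv ξ η).map_csInf_of_continuousAt
      (lipschitzWith_one_zetaInv ξ η).continuous.continuousAt hne hbdd]
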